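/- arXiv:1407.4398 — 8 statements merged into one kernel-verified Lean document; each statement's English description precedes it below -/
import Mathlib

section
/- Inner Pasch holds in the plane over any linearly ordered field: let F be a linearly ordered field and consider the plane F × F as an F-module. For all points a, p, c, b, q in F × F, if p lies strictly between a and c, q lies strictly between b and c, p ≠ b, and q ≠ a, then there exists a point z in F × F such that z lies strictly between a and q and z lies strictly between b and p. -/
/-!
Write `p = lineMap a c t` and `q = lineMap b c s` with `t, s ∈ (0, 1)`. In barycentric terms
`z = (t (1 - s) a + s (1 - t) b + t s c) / (t + s - t s)`, which is the point
`lineMap a q (t / (t + s - t s))` and, symmetrically, `lineMap b p (s / (t + s - t s))`.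
Both parameters lie in `(0, 1)` because `t + s - t s = t + s (1 - t) = s + t (1 - s)`.
-/

open AffineMap Set

section Field

variable {R V P : Type*} [Field R] [AddCommGroup V] [Module R V] [AddTorsor V P]

theorem lineMap_lineMap_eq_lineMap_lineMap (a b c : P) {t s : R} (h : t + s - t * s ≠ 0) :
    lineMap a (lineMap b c s) (t / (t + s - t * s)) =
      lineMap b (lineMap a c t) (s / (s + t - s * t)) := by
  rw [show s + t - s * t = t + s - t * s by ring]
  suffices hV : ∀ a b c : V, lineMap a (lineMap b c s) (t / (t + s - t * s)) =
      lineMap b (lineMap a c t) (s / (t + s - t * s)) by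
    let f : V →ᵃ[R] P := AffineEquiv.vaddConst R c
    have hf : ∀ x, f (x -ᵥ c) = x := fun x => vsub_vadd x c
    rw [← hf a, ← hf b, ← hf c]
    simp only [← AffineMap.apply_lineMap, hV]
  intro a b c
  simp only [lineMap_apply_module]
  match_scalars <;> field_simp <;> ring

end Field

section LinearOrderedField

variable {R : Type*} [Field R] [LinearOrder R] [IsStrictOrderedRing R]

theorem div_add_sub_mul_mem_Ioo {t s : R} (ht : t ∈ Ioo 0 1) (hs : s ∈ Ioo 0 1) :
    t / (t + s - t * s) ∈ Ioo 0 1 := by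
  have ht_lt : t < t + s - t * s := by linarith [mul_pos hs.1 (sub_pos.2 ht.2)]
  have hD : 0 < t + s - t * s := ht.1.trans ht_lt
  exact ⟨div_pos ht.1 hD, (div_lt_one hD).2 ht_lt⟩

variable {V P : Type*} [AddCommGroup V] [Module R V] [AddTorsor V P]

theorem Sbtw.inner_pasch {a b c p q : P} (hp : Sbtw R a p c) (hq : Sbtw R b q c)
    (hpb : p ≠ b) (hqa : q ≠ a) : ∃ z, Sbtw R a z q ∧ Sbtw R b z p := by
  obtain ⟨t, -, rfl⟩ := hp.wbtw
  obtain ⟨s, -, rfl⟩ := hq.wbtw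
  obtain ⟨-, ht⟩ := sbtw_lineMap_iff.1 hp
  obtain ⟨-, hs⟩ := sbtw_lineMap_iff.1 hq
  have hD : 0 < t + s - t * s := by linarith [ht.1, mul_pos hs.1 (sub_pos.2 ht.2)]
  refine ⟨_, sbtw_lineMap_iff.2 ⟨hqa.symm, div_add_sub_mul_mem_Ioo ht hs⟩, ?_⟩
  rw [lineMap_lineMap_eq_lineMap_lineMap a b c hD.ne']
  exact sbtw_lineMap_iff.2 ⟨hpb.symm, div_add_sub_mul_mem_Ioo hs ht⟩

end LinearOrderedField

/-- Inner Pasch holds in the plane over any linearly ordered field. -/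
theorem inner_pasch_plane (F : Type*) [Field F] [LinearOrder F] [IsStrictOrderedRing F]
    (a p c b q : F × F)
    (h1 : Sbtw F a p c) (h2 : Sbtw F b q c)
    (h3 : p ≠ b) (h4 : q ≠ a) :
    ∃ z : F × F, Sbtw F a z q ∧ Sbtw F b z p :=
  h1.inner_pasch h2 h3 h4
end

section
/- Circle–circle continuity holds in the plane over a Euclidean field: let F be a linearly ordered field in which every nonnegative element is a square. Let u, v ∈ F × F and r, R ∈ F with 0 ≤ r and 0 ≤ R. Suppose there is a point p with d²(p,u) = r² and d²(p,v) ≤ R² (a point of the first circle non-strictly inside the second circle), and a point q with d²(q,u) = r² and R² ≤ d²(q,v) (a point of the first circle non-strictly outside the second circle). Then there exists a point z with d²(z,u) = r² and d²(z,v) = R², i.e. the two circles meet. -/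
/-!
Put `w = v - u` and `D = |w|²`. By the law of cosines, a point `p` of the first circle satisfies
`|p - v|² = r² - 2⟪p - u, w⟫ + D`, and by Cauchy–Schwarz `⟪p - u, w⟫² ≤ r² D`. So the point inside
and the point outside squeeze `S = D + r² - R²` between two numbers of square at most `4 r² D`,
whence `S² ≤ 4 r² D`. Taking `m` with `m² = 4 r² D - S²`, the point
`z = u + (S w - m w⊥) / (2 D)` lies on both circles. If `D = 0` the circles are concentric and
the point inside is already on both.
-/

section

variable {F : Type*}

def distSq [Ring F] (a b : F × F) : F := (a.1 - b.1) ^ 2 + (a.2 - b.2) ^ 2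

def dot [Ring F] (a b : F × F) : F := a.1 * b.1 + a.2 * b.2

theorem distSq_law_cos [CommRing F] (p u v : F × F) :
    distSq p v = distSq p u - 2 * dot (p - u) (v - u) + distSq v u := by
  simp only [distSq, dot, Prod.fst_sub, Prod.snd_sub]
  ring

variable [CommRing F] [LinearOrder F] [IsStrictOrderedRing F]

theorem distSq_eq_zero_iff {a b : F × F} : distSq a b = 0 ↔ a = b := by
  rw [distSq, add_eq_zero_iff_of_nonneg (sq_nonneg _) (sq_nonneg _), sq_eq_zero_iff,
    sq_eq_zero_iff, sub_eq_zero, sub_eq_zero, Prod.ext_iff]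

theorem dot_sub_sq_le_distSq_mul_distSq (p u v : F × F) :
    dot (p - u) (v - u) ^ 2 ≤ distSq p u * distSq v u := by
  have lagrange : distSq p u * distSq v u = dot (p - u) (v - u) ^ 2 +
      ((p.1 - u.1) * (v.2 - u.2) - (p.2 - u.2) * (v.1 - u.1)) ^ 2 := by
    simp only [distSq, dot, Prod.fst_sub, Prod.snd_sub]
    ring
  rw [lagrange]
  exact le_add_of_nonneg_right (sq_nonneg _)

theorem sq_le_of_le_of_le {a b s c : F} (hb : b ≤ s) (ha : s ≤ a) (hb2 : b ^ 2 ≤ c)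
    (ha2 : a ^ 2 ≤ c) : s ^ 2 ≤ c := by
  rcases le_total 0 s with hs | hs
  · exact (pow_le_pow_left₀ hs ha 2).trans ha2
  · calc s ^ 2 = (-s) ^ 2 := (neg_sq s).symm
      _ ≤ (-b) ^ 2 := pow_le_pow_left₀ (neg_nonneg.mpr hs) (neg_le_neg hb) 2
      _ = b ^ 2 := neg_sq b
      _ ≤ c := hb2

theorem sq_add_sub_le_of_inside_outside {u v p q : F × F} {r R : F}
    (hp_on : distSq p u = r ^ 2) (hp_in : distSq p v ≤ R ^ 2)
    (hq_on : distSq q u = r ^ 2) (hq_out : R ^ 2 ≤ distSq q v) :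
    (distSq v u + r ^ 2 - R ^ 2) ^ 2 ≤ 4 * r ^ 2 * distSq v u := by
  have two_dot_sq_le (x : F × F) (hx : distSq x u = r ^ 2) :
      (2 * dot (x - u) (v - u)) ^ 2 ≤ 4 * r ^ 2 * distSq v u := by
    have := dot_sub_sq_le_distSq_mul_distSq x u v
    rw [hx] at this
    linarith
  have hp := distSq_law_cos p u v
  have hq := distSq_law_cos q u v
  exact sq_le_of_le_of_le (by linarith) (by linarith) (two_dot_sq_le q hq_on)
    (two_dot_sq_le p hp_on)

end

theorem exists_distSq_eq_distSq_eq {F : Type*} [Field F] [LinearOrder F] [IsStrictOrderedRing F]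
    (hsq : ∀ x : F, 0 ≤ x → ∃ y : F, y * y = x) {u v : F × F} {r R : F}
    (huv : u ≠ v) (h : (distSq v u + r ^ 2 - R ^ 2) ^ 2 ≤ 4 * r ^ 2 * distSq v u) :
    ∃ z : F × F, distSq z u = r ^ 2 ∧ distSq z v = R ^ 2 := by
  set D := distSq v u
  set S := D + r ^ 2 - R ^ 2
  have hD : D ≠ 0 := fun hD0 ↦ huv (distSq_eq_zero_iff.mp hD0).symm
  obtain ⟨m, hm⟩ := hsq (4 * r ^ 2 * D - S ^ 2) (sub_nonneg.mpr h)
  have hDw : D = (v.1 - u.1) ^ 2 + (v.2 - u.2) ^ 2 := rfl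
  let z : F × F := (u.1 + (S * (v.1 - u.1) + m * (v.2 - u.2)) / (2 * D),
    u.2 + (S * (v.2 - u.2) - m * (v.1 - u.1)) / (2 * D))
  have hzu : distSq z u = r ^ 2 := by
    simp only [z, distSq, add_sub_cancel_left]
    field_simp
    linear_combination D * hm - (S ^ 2 + m ^ 2) * hDw
  have hzv : 2 * dot (z - u) (v - u) = S := by
    simp only [z, dot, Prod.fst_sub, Prod.snd_sub, add_sub_cancel_left]
    field_simp
    linear_combination -S * hDw
  refine ⟨z, hzu, ?_⟩
  rw [distSq_law_cos z u v, hzu, hzv]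
  ring

theorem circle_circle_continuity_general (F : Type*) [Field F] [LinearOrder F] [IsStrictOrderedRing F]
    (hsq : ∀ x : F, 0 ≤ x → ∃ y : F, y * y = x)
    (u v : F × F) (r R : F)
    (p : F × F)
    (hp_on : (p.1 - u.1) ^ 2 + (p.2 - u.2) ^ 2 = r ^ 2)
    (hp_in : (p.1 - v.1) ^ 2 + (p.2 - v.2) ^ 2 ≤ R ^ 2)
    (q : F × F)
    (hq_on : (q.1 - u.1) ^ 2 + (q.2 - u.2) ^ 2 = r ^ 2)
    (hq_out : R ^ 2 ≤ (q.1 - v.1) ^ 2 + (q.2 - v.2) ^ 2) :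
    ∃ z : F × F, (z.1 - u.1) ^ 2 + (z.2 - u.2) ^ 2 = r ^ 2 ∧
      (z.1 - v.1) ^ 2 + (z.2 - v.2) ^ 2 = R ^ 2 := by
  obtain rfl | huv := eq_or_ne u v
  · exact ⟨p, hp_on, le_antisymm hp_in (hq_out.trans (hq_on.trans hp_on.symm).le)⟩
  exact exists_distSq_eq_distSq_eq hsq huv
    (sq_add_sub_le_of_inside_outside hp_on hp_in hq_on hq_out)

/-- Circle–circle continuity holds in the plane over a Euclidean field. -/
theorem circle_circle_continuity (F : Type*) [Field F] [LinearOrder F] [IsStrictOrderedRing F]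
    (hsq : ∀ x : F, 0 ≤ x → ∃ y : F, y * y = x)
    (u v : F × F) (r R : F) (hr : 0 ≤ r) (hR : 0 ≤ R)
    (p : F × F)
    (hp_on : (p.1 - u.1) ^ 2 + (p.2 - u.2) ^ 2 = r ^ 2)
    (hp_in : (p.1 - v.1) ^ 2 + (p.2 - v.2) ^ 2 ≤ R ^ 2)
    (q : F × F)
    (hq_on : (q.1 - u.1) ^ 2 + (q.2 - u.2) ^ 2 = r ^ 2)
    (hq_out : R ^ 2 ≤ (q.1 - v.1) ^ 2 + (q.2 - v.2) ^ 2) :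
    ∃ z : F × F, (z.1 - u.1) ^ 2 + (z.2 - u.2) ^ 2 = r ^ 2 ∧
      (z.1 - v.1) ^ 2 + (z.2 - v.2) ^ 2 = R ^ 2 :=
  circle_circle_continuity_general F hsq u v r R p hp_on hp_in q hq_on hq_out
end

section
/- Line–circle continuity holds in the plane over a Euclidean field: let F be a linearly ordered field in which every nonnegative element is a square. Let u ∈ F × F, let r ∈ F with 0 ≤ r, and let a, b ∈ F × F satisfy d²(a,u) ≤ r² (a is non-strictly inside the circle of center u and radius r) and r² ≤ d²(b,u) (b is non-strictly outside it). Then there exists t ∈ F with 0 ≤ t ≤ 1 such that the point a + t • (b − a) satisfies d²(a + t • (b − a), u) = r², i.e. the segment from a to b meets the circle. -/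
/-!
Along the segment, the squared distance to `u` is a quadratic `q(t) = A t² + B t + d²(a, u)`
with `A = d²(a, b) ≥ 0`, and `q - r²` is `≤ 0` at `t = 0` and `≥ 0` at `t = 1`. When `A > 0` the
discriminant of `q - r²` is nonnegative, hence a square in a Euclidean field, and the larger root
`(-B + √disc) / 2A` of the quadratic formula lies in `[0, 1]`; when `A = 0` the equation is linear.
-/

open Set

section OrderedField

variable {K : Type*} [Field K] [LinearOrder K] [IsStrictOrderedRing K]

theorem exists_mem_Icc_linear_eq_zero {b c : K} (h₀ : c ≤ 0) (h₁ : 0 ≤ b + c) :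
    ∃ x ∈ Icc (0 : K) 1, b * x + c = 0 := by
  rcases (show 0 ≤ b by linarith).eq_or_lt with rfl | hb
  · exact ⟨0, left_mem_Icc.2 zero_le_one, by linarith⟩
  · refine ⟨-c / b, ⟨div_nonneg (neg_nonneg.2 h₀) hb.le, (div_le_one hb).2 (by linarith)⟩, ?_⟩
    field_simp
    ring

theorem exists_mem_Icc_quadratic_eq_zero_of_pos
    (hsq : ∀ x : K, 0 ≤ x → ∃ y : K, y * y = x) {a b c : K} (ha : 0 < a) (h₀ : c ≤ 0)
    (h₁ : 0 ≤ a + b + c) : ∃ x ∈ Icc (0 : K) 1, a * (x * x) + b * x + c = 0 := by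
  obtain ⟨y, hy⟩ := hsq (discrim a b c) (by unfold discrim; nlinarith)
  set s := |y|
  have hs : discrim a b c = s * s := by rw [abs_mul_abs_self, hy]
  have hs₀ : 0 ≤ s := abs_nonneg y
  have hb_le : b ≤ s := by
    nlinarith [show s * s - b * b = -4 * a * c by rw [← hs]; unfold discrim; ring]
  have hs_le : s ≤ 2 * a + b := by
    nlinarith [show (2 * a + b) ^ 2 - s * s = 4 * a * (a + b + c) by rw [← hs]; unfold discrim; ring]
  refine ⟨(-b + s) / (2 * a), ⟨?_, ?_⟩, (quadratic_eq_zero_iff ha.ne' hs _).2 (Or.inl rfl)⟩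
  · exact div_nonneg (by linarith) (by positivity)
  · exact (div_le_one (by positivity)).2 (by linarith)

theorem exists_mem_Icc_quadratic_eq_zero
    (hsq : ∀ x : K, 0 ≤ x → ∃ y : K, y * y = x) {a b c : K} (ha : 0 ≤ a) (h₀ : c ≤ 0)
    (h₁ : 0 ≤ a + b + c) : ∃ x ∈ Icc (0 : K) 1, a * (x * x) + b * x + c = 0 := by
  rcases ha.eq_or_lt with rfl | ha
  · simpa using exists_mem_Icc_linear_eq_zero h₀ (by simpa using h₁)
  · exact exists_mem_Icc_quadratic_eq_zero_of_pos hsq ha h₀ h₁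

end OrderedField

theorem sq_dist_add_smul_sub {R : Type*} [CommRing R] (a b u : R × R) (t : R) :
    ((a + t • (b - a)).1 - u.1) ^ 2 + ((a + t • (b - a)).2 - u.2) ^ 2 =
      ((b.1 - a.1) ^ 2 + (b.2 - a.2) ^ 2) * (t * t)
        + 2 * ((a.1 - u.1) * (b.1 - a.1) + (a.2 - u.2) * (b.2 - a.2)) * t
        + ((a.1 - u.1) ^ 2 + (a.2 - u.2) ^ 2) := by
  simp only [Prod.fst_add, Prod.snd_add, Prod.smul_fst, Prod.smul_snd, Prod.fst_sub,
    Prod.snd_sub, smul_eq_mul]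
  ring

theorem line_circle_continuity_general (F : Type*) [Field F] [LinearOrder F] [IsStrictOrderedRing F]
    (hsq : ∀ x : F, 0 ≤ x → ∃ y : F, y * y = x)
    (u : F × F) (r : F)
    (a b : F × F)
    (ha_in : (a.1 - u.1) ^ 2 + (a.2 - u.2) ^ 2 ≤ r ^ 2)
    (hb_out : r ^ 2 ≤ (b.1 - u.1) ^ 2 + (b.2 - u.2) ^ 2) :
    ∃ t : F, 0 ≤ t ∧ t ≤ 1 ∧
      ((a + t • (b - a)).1 - u.1) ^ 2 + ((a + t • (b - a)).2 - u.2) ^ 2 = r ^ 2 := by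
  have hq_one := sq_dist_add_smul_sub a b u 1
  simp only [one_smul, add_sub_cancel, mul_one] at hq_one
  obtain ⟨t, ⟨ht₀, ht₁⟩, ht⟩ := exists_mem_Icc_quadratic_eq_zero hsq
    (b := 2 * ((a.1 - u.1) * (b.1 - a.1) + (a.2 - u.2) * (b.2 - a.2)))
    (add_nonneg (sq_nonneg (b.1 - a.1)) (sq_nonneg (b.2 - a.2)))
    (sub_nonpos.2 ha_in) (by linarith)
  exact ⟨t, ht₀, ht₁, by rw [sq_dist_add_smul_sub]; linarith⟩

/-- Line–circle continuity holds in the plane over a Euclidean field. -/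
theorem line_circle_continuity (F : Type*) [Field F] [LinearOrder F] [IsStrictOrderedRing F]
    (hsq : ∀ x : F, 0 ≤ x → ∃ y : F, y * y = x)
    (u : F × F) (r : F) (hr : 0 ≤ r)
    (a b : F × F)
    (ha_in : (a.1 - u.1) ^ 2 + (a.2 - u.2) ^ 2 ≤ r ^ 2)
    (hb_out : r ^ 2 ≤ (b.1 - u.1) ^ 2 + (b.2 - u.2) ^ 2) :
    ∃ t : F, 0 ≤ t ∧ t ≤ 1 ∧
      ((a + t • (b - a)).1 - u.1) ^ 2 + ((a + t • (b - a)).2 - u.2) ^ 2 = r ^ 2 :=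
  line_circle_continuity_general F hsq u r a b ha_in hb_out
end

section
/- Middle parallel lemma: in the Euclidean plane, let L be a line and let J, K, N be lines each perpendicular to L (every vector in their directions is orthogonal to every vector in the direction of L), meeting L in points j ∈ J ∩ L, k ∈ K ∩ L, n ∈ N ∩ L respectively, with j ≠ n and k weakly between j and n (Wbtw ℝ j k n). Let M be a line containing a point e ∈ J and a point f ∈ N. Then there exists a point r with r ∈ M, r ∈ K, and r weakly between e and f (Wbtw ℝ e r f); in particular M meets the middle perpendicular K. -/
open scoped RealInnerProductSpace

/-- Middle parallel lemma: a line meeting the outer two of three perpendiculars to `L`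
also meets the middle one, in a point weakly between the two intersection points. -/
theorem middle_parallel
    (L J K N M : AffineSubspace ℝ (EuclideanSpace ℝ (Fin 2)))
    (hL : Module.finrank ℝ L.direction = 1)
    (hJ : Module.finrank ℝ J.direction = 1)
    (hK : Module.finrank ℝ K.direction = 1)
    (hN : Module.finrank ℝ N.direction = 1)
    (hM : Module.finrank ℝ M.direction = 1)
    (hJL : ∀ v ∈ J.direction, ∀ w ∈ L.direction, ⟪v, w⟫ = 0)
    (hKL : ∀ v ∈ K.direction, ∀ w ∈ L.direction, ⟪v, w⟫ = 0)
    (hNL : ∀ v ∈ N.direction, ∀ w ∈ L.direction, ⟪v, w⟫ = 0)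
    (j k n : EuclideanSpace ℝ (Fin 2))
    (hjJ : j ∈ J) (hjL : j ∈ L) (hkK : k ∈ K) (hkL : k ∈ L) (hnN : n ∈ N) (hnL : n ∈ L)
    (hjn : j ≠ n) (hjkn : Wbtw ℝ j k n)
    (e f : EuclideanSpace ℝ (Fin 2))
    (heJ : e ∈ J) (heM : e ∈ M) (hfN : f ∈ N) (hfM : f ∈ M) :
    ∃ r, r ∈ M ∧ r ∈ K ∧ Wbtw ℝ e r f := by
  obtain ⟨t, ht, hk⟩ := hjkn
  refine ⟨AffineMap.lineMap e f t, AffineMap.lineMap_mem t heM hfM, ?_, ⟨t, ht, rfl⟩⟩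
  -- direction of L is spanned by n - j
  have hd : (n - j) ∈ L.direction := by
    simpa using AffineSubspace.vsub_mem_direction hnL hjL
  have hdne : n - j ≠ 0 := sub_ne_zero.mpr (Ne.symm hjn)
  have hLdir : L.direction = ℝ ∙ (n - j) := by
    refine (Submodule.eq_of_le_of_finrank_eq ?_ ?_).symm
    · exact (Submodule.span_singleton_le_iff_mem _ _).mpr hd
    · rw [finrank_span_singleton hdne, hL]
  have horthrank : Module.finrank ℝ (L.direction)ᗮ = 1 := by
    have := Submodule.finrank_add_finrank_orthogonal (K := L.direction)
    rw [hL, finrank_euclideanSpace_fin] at this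
    omega
  have hKeq : K.direction = (L.direction)ᗮ := by
    refine Submodule.eq_of_le_of_finrank_eq ?_ (by rw [hK, horthrank])
    intro v hv
    rw [Submodule.mem_orthogonal]
    intro u hu
    rw [real_inner_comm]
    exact hKL v hv u hu
  rw [← AffineSubspace.vsub_right_mem_direction_iff_mem hkK, hKeq,
    Submodule.mem_orthogonal]
  intro u hu
  rw [hLdir, Submodule.mem_span_singleton] at hu
  obtain ⟨c, rfl⟩ := hu
  have he' : e - j ∈ J.direction := by
    simpa using AffineSubspace.vsub_mem_direction heJ hjJ
  have hf' : f - n ∈ N.direction := by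
    simpa using AffineSubspace.vsub_mem_direction hfN hnN
  have h1 : ⟪n - j, e - j⟫ = 0 := by
    rw [real_inner_comm]; exact hJL _ he' _ hd
  have h2 : ⟪n - j, f - n⟫ = 0 := by
    rw [real_inner_comm]; exact hNL _ hf' _ hd
  have hvk : AffineMap.lineMap e f t -ᵥ k = (1 - t) • (e - j) + t • (f - n) := by
    subst hk
    simp only [AffineMap.lineMap_apply, vsub_eq_sub, vadd_eq_add]
    module
  rw [hvk, inner_smul_left, inner_add_right, inner_smul_right, inner_smul_right, h1, h2]
  ring
end

section
/- Exterior angle theorem (Euclid I.16): in the Euclidean plane, let a, b, c, d be points with c strictly between b and d (Sbtw ℝ b c d) and with a not on the line through b and c (a is not in the affine span of {b, c}). Then the interior angle at a is strictly less than the exterior angle at c: ∠ b a c < ∠ a c d. -/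
open scoped EuclideanGeometry

/-- Exterior angle theorem (Euclid I.16). -/
theorem exterior_angle (a b c d : EuclideanSpace ℝ (Fin 2))
    (hbcd : Sbtw ℝ b c d)
    (ha : a ∉ affineSpan ℝ ({b, c} : Set (EuclideanSpace ℝ (Fin 2)))) :
    ∠ b a c < ∠ a c d := by
  have hnc : ¬Collinear ℝ ({a, b, c} : Set (EuclideanSpace ℝ (Fin 2))) := fun h =>
    ha (h.mem_affineSpan_of_mem_of_ne (p₁ := b) (p₂ := c) (by simp) (by simp) (by simp)
      hbcd.left_ne)
  have hext : ∠ a c d = ∠ c a b + ∠ a b c :=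
    EuclideanGeometry.exterior_angle_eq_angle_add_angle d hbcd.symm
  rw [hext, EuclideanGeometry.angle_comm b a c]
  linarith [EuclideanGeometry.angle_pos_of_not_collinear hnc]
end

section
/- In the Euclidean plane, let M and L be lines, let p ∈ M with p ∉ L, and let a, f ∈ L with a ≠ f. Suppose the vector a −ᵥ p is orthogonal to the direction of M (the segment from p to a is perpendicular to M at p) and the vector p −ᵥ f is orthogonal to the direction of L (f is the foot of the perpendicular from p to L). Then there exists a point e ∈ M with f strictly between e and a (Sbtw ℝ e f a); in particular M meets L. -/
/-!
The point `e` is found on the line `af`, beyond `f`: in the right triangle `a p e` with right angle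
at `p`, the foot `f` of the altitude from `p` satisfies `ef · fa = pf²`, so
`e = a + (1 + pf² / fa²) (f - a)`. This `e` makes `pe ⊥ pa`, and in the plane the perpendicular to
`pa` through `p` is the line `M`.
-/

open scoped RealInnerProductSpace
open AffineMap Module

theorem Submodule.eq_orthogonal_span_singleton_of_le {𝕜 E : Type*} [RCLike 𝕜]
    [NormedAddCommGroup E] [InnerProductSpace 𝕜 E] [FiniteDimensional 𝕜 E]
    {K : Submodule 𝕜 E} {v : E} (hv : v ≠ 0) (hK : K ≤ (𝕜 ∙ v)ᗮ)
    (hdim : finrank 𝕜 K + 1 = finrank 𝕜 E) : K = (𝕜 ∙ v)ᗮ := by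
  refine Submodule.eq_of_le_of_finrank_eq hK ?_
  have := (𝕜 ∙ v).finrank_add_finrank_orthogonal
  rw [finrank_span_singleton hv] at this
  omega

theorem inner_vsub_lineMap_vsub_eq_zero_of_inner_vsub_vsub_eq_zero {V P : Type*}
    [NormedAddCommGroup V] [InnerProductSpace ℝ V] [MetricSpace P] [NormedAddTorsor V P]
    {a f p : P} (hpf : ⟪p -ᵥ f, a -ᵥ f⟫ = 0) (haf : a ≠ f) :
    ⟪a -ᵥ p, lineMap a f (1 + dist p f ^ 2 / dist a f ^ 2) -ᵥ p⟫ = 0 := by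
  set u := a -ᵥ f
  set v := p -ᵥ f
  have hu : ‖u‖ ≠ 0 := by simpa [u] using dist_ne_zero.2 haf
  have hap : a -ᵥ p = u - v := (vsub_sub_vsub_cancel_right a p f).symm
  have hep : lineMap a f (1 + dist p f ^ 2 / dist a f ^ 2) -ᵥ p
      = -(‖v‖ ^ 2 / ‖u‖ ^ 2) • u - v := by
    rw [lineMap_apply, vadd_vsub_assoc, hap, dist_eq_norm_vsub V, dist_eq_norm_vsub V,
      ← neg_vsub_eq_vsub_rev a f]
    module
  rw [hap, hep, inner_sub_left, inner_sub_right, inner_sub_right, inner_smul_right,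
    inner_smul_right, real_inner_self_eq_norm_sq, real_inner_self_eq_norm_sq, real_inner_comm,
    hpf]
  field_simp
  ring

theorem perp_foot_meets_general
    (M L : AffineSubspace ℝ (EuclideanSpace ℝ (Fin 2)))
    (hM : Module.finrank ℝ M.direction = 1)
    (p : EuclideanSpace ℝ (Fin 2)) (hpM : p ∈ M) (hpL : p ∉ L)
    (a f : EuclideanSpace ℝ (Fin 2)) (haL : a ∈ L) (hfL : f ∈ L) (haf : a ≠ f)
    (hperpM : ∀ w ∈ M.direction, ⟪a -ᵥ p, w⟫ = 0)
    (hperpL : ∀ w ∈ L.direction, ⟪p -ᵥ f, w⟫ = 0) :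
    ∃ e ∈ M, Sbtw ℝ e f a := by
  have hpf : p ≠ f := fun h => hpL (h ▸ hfL)
  have hap : a ≠ p := fun h => hpL (h ▸ haL)
  have hMdir : M.direction = (ℝ ∙ (a -ᵥ p))ᗮ :=
    Submodule.eq_orthogonal_span_singleton_of_le (vsub_ne_zero.2 hap)
      (fun w hw => Submodule.mem_orthogonal_singleton_iff_inner_right.2 (hperpM w hw))
      (by rw [hM, finrank_euclideanSpace_fin])
  set t : ℝ := 1 + dist p f ^ 2 / dist a f ^ 2
  have ht : 1 < t :=
    lt_add_of_pos_right 1 (div_pos (pow_pos (dist_pos.2 hpf) 2) (pow_pos (dist_pos.2 haf) 2))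
  refine ⟨lineMap a f t, ?_, sbtw_iff_right_ne_and_left_mem_image_Ioi.2 ⟨haf, t, ht, rfl⟩⟩
  rw [← AffineSubspace.vsub_right_mem_direction_iff_mem hpM, hMdir,
    Submodule.mem_orthogonal_singleton_iff_inner_right]
  exact inner_vsub_lineMap_vsub_eq_zero_of_inner_vsub_vsub_eq_zero
    (hperpL _ (AffineSubspace.vsub_mem_direction haL hfL)) haf

/-- If `pa ⊥ M` at `p` and `f` is the foot of the perpendicular from `p` to `L`,
with `a, f ∈ L` distinct and `p ∉ L`, then `M` meets `L` in a point `e` with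
`f` strictly between `e` and `a`. -/
theorem perp_foot_meets
    (M L : AffineSubspace ℝ (EuclideanSpace ℝ (Fin 2)))
    (hM : Module.finrank ℝ M.direction = 1)
    (hL : Module.finrank ℝ L.direction = 1)
    (p : EuclideanSpace ℝ (Fin 2)) (hpM : p ∈ M) (hpL : p ∉ L)
    (a f : EuclideanSpace ℝ (Fin 2)) (haL : a ∈ L) (hfL : f ∈ L) (haf : a ≠ f)
    (hperpM : ∀ w ∈ M.direction, ⟪a -ᵥ p, w⟫ = 0)
    (hperpL : ∀ w ∈ L.direction, ⟪p -ᵥ f, w⟫ = 0) :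
    ∃ e ∈ M, Sbtw ℝ e f a :=
  perp_foot_meets_general M L hM p hpM hpL a f haL hfL haf hperpM hperpL
end

section
/- A Saccheri quadrilateral is a rectangle: in the Euclidean plane, let a, b, c, d be points with b ≠ c, ∠ a b c = π/2, ∠ b c d = π/2, dist a b = dist c d, and such that a and d lie strictly on the same side of the line through b and c. Then the remaining two angles are also right: ∠ b a d = π/2 and ∠ c d a = π/2. -/
open scoped EuclideanGeometry RealInnerProductSpace

lemma aux_collinear {u v w : EuclideanSpace ℝ (Fin 2)} (hw : w ≠ 0) (hv : v ≠ 0)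
    (hu : ⟪u, w⟫ = 0) (hvw : ⟪v, w⟫ = 0) : ∃ r : ℝ, r • v = u := by
  have hK : Module.finrank ℝ ((ℝ ∙ w)ᗮ : Submodule ℝ (EuclideanSpace ℝ (Fin 2))) = 1 := by
    have h := (ℝ ∙ w).finrank_add_finrank_orthogonal
    rw [finrank_span_singleton hw, finrank_euclideanSpace, Fintype.card_fin] at h
    omega
  have hvK : v ∈ (ℝ ∙ w)ᗮ := Submodule.mem_orthogonal_singleton_iff_inner_left.2 hvw
  have huK : u ∈ (ℝ ∙ w)ᗮ := Submodule.mem_orthogonal_singleton_iff_inner_left.2 hu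
  obtain ⟨r, hr⟩ := (finrank_eq_one_iff_of_nonzero' (⟨v, hvK⟩ : (ℝ ∙ w)ᗮ)
    (by simpa using hv)).1 hK ⟨u, huK⟩
  exact ⟨r, congrArg Subtype.val hr⟩

/-- A Saccheri quadrilateral is a rectangle. -/
theorem saccheri_is_rectangle (a b c d : EuclideanSpace ℝ (Fin 2))
    (hbc : b ≠ c)
    (h1 : ∠ a b c = Real.pi / 2) (h2 : ∠ b c d = Real.pi / 2)
    (h3 : dist a b = dist c d)
    (h4 : (affineSpan ℝ ({b, c} : Set (EuclideanSpace ℝ (Fin 2)))).SSameSide a d) :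
    ∠ b a d = Real.pi / 2 ∧ ∠ c d a = Real.pi / 2 := by
  have hbs : b ∈ affineSpan ℝ ({b, c} : Set (EuclideanSpace ℝ (Fin 2))) :=
    left_mem_affineSpan_pair ℝ b c
  have has : a ∉ affineSpan ℝ ({b, c} : Set (EuclideanSpace ℝ (Fin 2))) := h4.2.1
  have hds : d ∉ affineSpan ℝ ({b, c} : Set (EuclideanSpace ℝ (Fin 2))) := h4.2.2
  have hw : c - b ≠ 0 := sub_ne_zero.2 (Ne.symm hbc)
  have hu_ne : a - b ≠ 0 := by
    intro h
    exact has (by rw [sub_eq_zero.1 h]; exact hbs)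
  have hv_ne : d - c ≠ 0 := by
    intro h
    exact hds (by rw [sub_eq_zero.1 h]; exact right_mem_affineSpan_pair ℝ b c)
  have hu0 : ⟪a - b, c - b⟫ = 0 :=
    (InnerProductGeometry.inner_eq_zero_iff_angle_eq_pi_div_two (a - b) (c - b)).2 h1
  have hv0' : ⟪b - c, d - c⟫ = 0 :=
    (InnerProductGeometry.inner_eq_zero_iff_angle_eq_pi_div_two (b - c) (d - c)).2 h2
  have hv0 : ⟪d - c, c - b⟫ = 0 := by
    have hcb : (c - b) = -(b - c) := by abel
    rw [hcb, inner_neg_right, real_inner_comm, hv0', neg_zero]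
  obtain ⟨r, hr⟩ := aux_collinear hw hv_ne hu0 hv0
  -- norms equal
  have hnorm : ‖a - b‖ = ‖d - c‖ := by
    rw [dist_eq_norm, dist_eq_norm] at h3
    rw [h3, norm_sub_rev]
  -- same-side gives r > 0
  obtain ha' | ⟨p₂, hp₂, hray⟩ := (AffineSubspace.wSameSide_iff_exists_left hbs).1 h4.1
  · exact absurd ha' has
  have hdp : d - p₂ ≠ 0 := by
    intro h
    exact hds (by rw [sub_eq_zero.1 h]; exact hp₂)
  obtain ⟨t, ht⟩ : ∃ t : ℝ, t • (c - b) = p₂ - b := by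
    have := (vadd_left_mem_affineSpan_pair (k := ℝ) (p₁ := b) (p₂ := c)
      (v := p₂ - b)).1 (by simpa using hp₂)
    simpa using this
  have hray' : SameRay ℝ (a - b) (d - p₂) := hray
  obtain ⟨s', hs'pos, hs'⟩ := hray'.exists_pos_left hu_ne hdp
  have hdp_eq : d - p₂ = (d - c) + (1 - t) • (c - b) := by
    rw [sub_smul, one_smul, ht]
    abel
  have hvv : ⟪d - c, d - p₂⟫ = ‖d - c‖ ^ 2 := by
    rw [hdp_eq, inner_add_right, inner_smul_right, hv0, real_inner_self_eq_norm_sq]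
    ring
  have hvu : ⟪d - c, a - b⟫ = r * ‖d - c‖ ^ 2 := by
    rw [← hr, inner_smul_right, real_inner_self_eq_norm_sq]
  have hnv : ‖d - c‖ ^ 2 ≠ 0 := pow_ne_zero 2 (norm_ne_zero_iff.2 hv_ne)
  have hsr : s' * r = 1 := by
    have h5 : ⟪d - c, s' • (a - b)⟫ = ‖d - c‖ ^ 2 := by rw [hs', hvv]
    rw [inner_smul_right, hvu] at h5
    have h5' : (s' * r - 1) * ‖d - c‖ ^ 2 = 0 := by linear_combination h5
    rcases mul_eq_zero.1 h5' with h | h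
    · linarith
    · exact absurd h hnv
  have hrabs : |r| = 1 := by
    have : ‖r • (d - c)‖ = ‖d - c‖ := by rw [hr, hnorm]
    rw [norm_smul, Real.norm_eq_abs] at this
    have h5' : (|r| - 1) * ‖d - c‖ = 0 := by linear_combination this
    rcases mul_eq_zero.1 h5' with h | h
    · linarith
    · exact absurd h (norm_ne_zero_iff.2 hv_ne)
  have hrpos : 0 < r := by
    rcases lt_trichotomy r 0 with h | h | h
    · nlinarith
    · rw [h] at hsr; norm_num at hsr
    · exact h
  have hr1 : r = 1 := by
    rcases abs_eq (by norm_num : (0:ℝ) ≤ 1) |>.1 hrabs with h | h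
    · exact h
    · linarith
  have huv : a - b = d - c := by rw [← hr, hr1, one_smul]
  have hda : d - a = c - b := by
    have : d - a = (d - c) - (a - b) + (c - b) := by abel
    rw [this, huv]; abel
  constructor
  · refine (InnerProductGeometry.inner_eq_zero_iff_angle_eq_pi_div_two (b - a) (d - a)).1 ?_
    have hba : b - a = -(a - b) := by abel
    rw [hda, hba, inner_neg_left, hu0, neg_zero]
  · refine (InnerProductGeometry.inner_eq_zero_iff_angle_eq_pi_div_two (c - d) (a - d)).1 ?_
    have h6 : c - d = -(a - b) := by rw [huv]; abel
    have h7 : a - d = -(c - b) := by rw [show a - d = -(d - a) by abel, hda]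
    rw [h6, h7, inner_neg_neg, hu0]
end

section
/- A transversal making equal alternate interior angles implies parallel lines: in the Euclidean plane, let p, q, r, s, t be points with t strictly between p and q (Sbtw ℝ p t q), t strictly between r and s (Sbtw ℝ r t s), dist p t = dist q t, dist r t = dist s t, r ≠ p, and q not on the line through p and r. Then the line through p and r and the line through q and s do not meet: no point lies on both. -/
open AffineMap

lemma sbtw_dist_eq_midpoint' (p q t : EuclideanSpace ℝ (Fin 2)) (h1 : Sbtw ℝ p t q)
    (h3 : dist p t = dist q t) : t = midpoint ℝ p q := by
  obtain ⟨θ, ⟨h0, hle⟩, ht⟩ := h1.wbtw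
  have hpq : dist p q ≠ 0 := dist_ne_zero.mpr h1.left_ne_right
  rw [← ht, dist_comm p, dist_comm q, dist_lineMap_left, dist_lineMap_right] at h3
  have hθ : θ = 1/2 := by
    have := mul_right_cancel₀ hpq h3
    rw [Real.norm_eq_abs, Real.norm_eq_abs, abs_of_nonneg h0,
      abs_of_nonneg (by linarith : (0:ℝ) ≤ 1 - θ)] at this
    linarith
  rw [← ht, hθ, midpoint]; norm_num

/-- A transversal making equal alternate interior angles implies the two lines are
parallel (do not meet). -/
theorem alternate_interior_angles_parallel (p q r s t : EuclideanSpace ℝ (Fin 2))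
    (h1 : Sbtw ℝ p t q) (h2 : Sbtw ℝ r t s)
    (h3 : dist p t = dist q t) (h4 : dist r t = dist s t)
    (h5 : r ≠ p)
    (h6 : q ∉ affineSpan ℝ ({p, r} : Set (EuclideanSpace ℝ (Fin 2)))) :
    ∀ x : EuclideanSpace ℝ (Fin 2),
      ¬ (x ∈ affineSpan ℝ ({p, r} : Set (EuclideanSpace ℝ (Fin 2))) ∧
         x ∈ affineSpan ℝ ({q, s} : Set (EuclideanSpace ℝ (Fin 2)))) := by
  have hm1 := sbtw_dist_eq_midpoint' p q t h1 h3
  have hm2 := sbtw_dist_eq_midpoint' r s t h2 h4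
  have hpqrs : p + q = r + s := by
    have h12 : midpoint ℝ p q = midpoint ℝ r s := hm1 ▸ hm2
    rw [midpoint_eq_smul_add, midpoint_eq_smul_add] at h12
    have := congrArg (fun v => (2:ℝ) • v) h12
    simpa [smul_smul] using this
  have hsq : s - q = p - r := sub_eq_sub_iff_add_eq_add.mpr (by rw [hpqrs]; abel)
  rintro x ⟨hx1, hx2⟩
  obtain ⟨a, ha⟩ : ∃ a : ℝ, a • (r -ᵥ p) = x -ᵥ p :=
    vadd_left_mem_affineSpan_pair.mp (by simpa using hx1)
  obtain ⟨b, hb⟩ : ∃ b : ℝ, b • (s -ᵥ q) = x -ᵥ q :=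
    vadd_left_mem_affineSpan_pair.mp (by simpa using hx2)
  apply h6
  have hq : q = (a + b) • (r -ᵥ p) +ᵥ p := by
    simp only [vsub_eq_sub, vadd_eq_add] at *
    rw [hsq] at hb
    have : q - p = (a + b) • (r - p) := by
      have h' : q - p = (x - p) - (x - q) := by abel
      rw [h', ← ha, ← hb]; module
    rw [← this]; abel
  rw [hq]
  exact smul_vsub_vadd_mem_affineSpan_pair _ _ _
end
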